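/- arXiv:1908.05095 — 4 statements merged into one kernel-verified Lean document; each statement's English description precedes it below -/
import Mathlib

section
/- Let n ∈ ℕ, 0 < s < 1, n > 4s, 0 < α < 2s, and let Ω ⊂ ℝⁿ be a bounded domain with 0 ∈ Ω. Let φ ∈ C_c^∞(Ω) and let u : ℝⁿ → ℝ be measurable with [u]_s < ∞, ∫_{ℝⁿ} |u(x)|^{2_{s,α}}/|x|^α dx < ∞, and |u(x)| ≤ C/|x|^{n−2s} for all |x| ≥ 1 (for some constant C > 0). Then the product φu belongs to H^s(Ω), i.e. φu ∈ L²(Ω) and [φu]_{s,Ω} < ∞. -/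
open MeasureTheory ENNReal Filter Topology

noncomputable section

/-- Euclidean space ℝⁿ. -/
abbrev Rn (n : ℕ) := EuclideanSpace ℝ (Fin n)

/-- The squared Gagliardo seminorm `[u]_{s,U}² = ∫_{U×U} |u(x)−u(y)|²/|x−y|^{n+2s} dx dy`. -/
def gagSq (n : ℕ) (s : ℝ) (U : Set (Rn n)) (u : Rn n → ℝ) : ℝ≥0∞ :=
  ∫⁻ x in U, ∫⁻ y in U, ENNReal.ofReal (|u x - u y| ^ 2 / ‖x - y‖ ^ ((n : ℝ) + 2 * s))

/-- The Hardy integral `∫_U |u(x)|^{2_{s,α}}/|x|^α dx` with `2_{s,α} = 2(n−α)/(n−2s)`. -/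
def hardyInt (n : ℕ) (s α : ℝ) (U : Set (Rn n)) (u : Rn n → ℝ) : ℝ≥0∞ :=
  ∫⁻ x in U, ENNReal.ofReal (|u x| ^ (2 * ((n : ℝ) - α) / ((n : ℝ) - 2 * s)) / ‖x‖ ^ α)

/-- Membership in `H^s(Ω)`: `u ∈ L²(Ω)` and `[u]_{s,Ω} < ∞`. -/
def memHs (n : ℕ) (s : ℝ) (Ω : Set (Rn n)) (u : Rn n → ℝ) : Prop :=
  MemLp u 2 (volume.restrict Ω) ∧ gagSq n s Ω u < ⊤

/-- The energy `[u]_{s,Ω}² + λ ∫_Ω |u|² dx`. -/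
def energy (n : ℕ) (s lam : ℝ) (Ω : Set (Rn n)) (u : Rn n → ℝ) : ℝ :=
  (gagSq n s Ω u).toReal + lam * ∫ x in Ω, (u x) ^ 2

/-- The optimal constant `μ_{α,λ}(Ω)`. -/
def mu (n : ℕ) (s α lam : ℝ) (Ω : Set (Rn n)) : ℝ :=
  sInf { c | ∃ u : Rn n → ℝ, memHs n s Ω u ∧ hardyInt n s α Ω u = 1 ∧
    c = energy n s lam Ω u }

/-- `u` vanishes at infinity: `|{|u| > a}| < ∞` for every `a > 0`. -/
def vanishesAtInfinity (n : ℕ) (u : Rn n → ℝ) : Prop :=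
  ∀ a : ℝ, 0 < a → volume {x : Rn n | a < |u x|} < ⊤

/-- The global constant `μ_α`. -/
def muGlob (n : ℕ) (s α : ℝ) : ℝ :=
  sInf { c | ∃ u : Rn n → ℝ, Measurable u ∧ vanishesAtInfinity n u ∧
    hardyInt n s α Set.univ u = 1 ∧ c = (gagSq n s Set.univ u).toReal }

lemma aux_num (P Q U V M mn : ℝ) (hQ : |Q| ≤ M) (hmin : (P - Q)^2 ≤ mn) :
    |P*U - Q*V|^2 ≤ 2*M^2*|U - V|^2 + 2*U^2*mn := by
  rw [sq_abs, sq_abs]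
  have hQ2 : Q^2 ≤ M^2 := by nlinarith [sq_abs Q, abs_nonneg Q]
  nlinarith [sq_nonneg (Q*(U-V) - U*(P-Q)), sq_nonneg (U-V), sq_nonneg U,
    mul_le_mul_of_nonneg_right hQ2 (sq_nonneg (U-V)),
    mul_le_mul_of_nonneg_left hmin (sq_nonneg U)]


open Set in
lemma aux_ball_rpow (n : ℕ) {r : ℝ} (hrn : r < n) :
    ∫⁻ z in Metric.ball (0 : Rn n) 1, ENNReal.ofReal (‖z‖ ^ (-r)) < ⊤ := by
  have hV : volume (Metric.ball (0 : Rn n) 1) < ⊤ := measure_ball_lt_top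
  rcases le_or_gt r 0 with hr0 | hr0
  · have hb : ∀ z ∈ Metric.ball (0:Rn n) 1, ENNReal.ofReal (‖z‖ ^ (-r)) ≤ 1 := by
      intro z hz
      rw [← ENNReal.ofReal_one]
      apply ENNReal.ofReal_le_ofReal
      rcases eq_or_ne z 0 with rfl | hz0
      · rcases eq_or_lt_of_le hr0 with rfl | hr0'
        · simp
        · rw [norm_zero, Real.zero_rpow (by linarith : -r ≠ 0)]; norm_num
      · refine Real.rpow_le_one (norm_nonneg _) ?_ (by linarith)
        rw [Metric.mem_ball, dist_zero_right] at hz; linarith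
    calc ∫⁻ z in Metric.ball (0:Rn n) 1, ENNReal.ofReal (‖z‖ ^ (-r))
        ≤ ∫⁻ _ in Metric.ball (0:Rn n) 1, (1:ℝ≥0∞) :=
          setLIntegral_mono_ae aemeasurable_const (Eventually.of_forall hb)
      _ = volume (Metric.ball (0:Rn n) 1) := by rw [setLIntegral_one]
      _ < ⊤ := hV
  · set ν := volume.restrict (Metric.ball (0 : Rn n) 1) with hν
    have hmble : AEMeasurable (fun z : Rn n => ‖z‖ ^ (-r)) ν := by
      apply Measurable.aemeasurable; fun_prop
    rw [lintegral_eq_lintegral_meas_le ν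
      (Eventually.of_forall fun z => Real.rpow_nonneg (norm_nonneg _) _) hmble]
    have hsplit : Ioi (0:ℝ) = Ioc (0:ℝ) 1 ∪ Ioi 1 := (Ioc_union_Ioi_eq_Ioi zero_le_one).symm
    rw [hsplit]
    refine (lintegral_union_le _ _ _).trans_lt ?_
    have hV : volume (Metric.ball (0 : Rn n) 1) < ⊤ := measure_ball_lt_top
    have h1 : ∫⁻ t in Ioc (0:ℝ) 1, ν {a | t ≤ ‖a‖ ^ (-r)} < ⊤ := by
      refine (lintegral_mono (g := fun _ => volume (Metric.ball (0 : Rn n) 1)) (fun t =>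
        (measure_mono (subset_univ _)).trans_eq (Measure.restrict_apply_univ _))).trans_lt ?_
      rw [setLIntegral_const]
      refine ENNReal.mul_lt_top hV ?_
      rw [Real.volume_Ioc]
      exact ofReal_lt_top
    have h2 : ∫⁻ t in Ioi (1:ℝ), ν {a | t ≤ ‖a‖ ^ (-r)} < ⊤ := by
      have hW : volume (Metric.ball (0 : Rn n) 1) ≠ ⊤ := hV.ne
      have key : ∀ t : ℝ, t ∈ Ioi (1:ℝ) →
          ν {a | t ≤ ‖a‖ ^ (-r)} ≤ ENNReal.ofReal (t ^ (-((n:ℝ)/r))) * volume (Metric.ball (0 : Rn n) 1) := by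
        intro t ht
        have ht1 : (1:ℝ) < t := ht
        have ht0 : (0:ℝ) < t := lt_trans one_pos ht1
        have hsub : {a : Rn n | t ≤ ‖a‖ ^ (-r)} ⊆ Metric.closedBall 0 (t ^ (-r⁻¹)) := by
          intro a ha
          simp only [Set.mem_setOf_eq] at ha
          rcases eq_or_ne a 0 with rfl | ha0
          · exfalso
            rw [norm_zero, Real.zero_rpow (by linarith : -r ≠ 0)] at ha
            linarith
          · have hna : 0 < ‖a‖ := norm_pos_iff.2 ha0
            rw [Metric.mem_closedBall, dist_zero_right]
            calc ‖a‖ = (‖a‖ ^ (-r)) ^ (-r⁻¹) := by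
                  rw [← Real.rpow_mul hna.le, neg_mul_neg, mul_inv_cancel₀ hr0.ne', Real.rpow_one]
              _ ≤ t ^ (-r⁻¹) := Real.rpow_le_rpow_of_nonpos ht0 ha
                  (neg_nonpos.2 (by positivity))
        calc ν {a : Rn n | t ≤ ‖a‖ ^ (-r)} ≤ volume (Metric.closedBall (0:Rn n) (t ^ (-r⁻¹))) :=
              le_trans (Measure.restrict_apply_le _ _) (measure_mono hsub)
          _ = ENNReal.ofReal ((t ^ (-r⁻¹)) ^ Module.finrank ℝ (Rn n)) * volume (Metric.ball (0:Rn n) 1) :=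
              Measure.addHaar_closedBall _ _ (Real.rpow_nonneg ht0.le _)
          _ = ENNReal.ofReal (t ^ (-((n:ℝ)/r))) * volume (Metric.ball (0:Rn n) 1) := by
              congr 2
              rw [finrank_euclideanSpace_fin, ← Real.rpow_natCast (t ^ (-r⁻¹)) n,
                ← Real.rpow_mul ht0.le]
              congr 1
              field_simp
      refine (setLIntegral_mono_ae (by fun_prop) (Eventually.of_forall key)).trans_lt ?_
      rw [lintegral_mul_const' _ _ hW]
      refine ENNReal.mul_lt_top ?_ hV
      refine IntegrableOn.setLIntegral_lt_top ?_
      refine integrableOn_Ioi_rpow_of_lt ?_ one_pos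
      rw [neg_lt, neg_neg]
      rw [lt_div_iff₀ hr0]
      linarith
    exact ENNReal.add_lt_top.2 ⟨h1, h2⟩

set_option maxHeartbeats 2000000 in
/-- If `φ ∈ C_c^∞(Ω)` and `u` is measurable with `[u]_s < ∞`, finite Hardy
integral and decay `|u(x)| ≤ C/|x|^{n−2s}` for `|x| ≥ 1`, then `φu ∈ H^s(Ω)`. -/
theorem stmt_1 (n : ℕ) (s α : ℝ) (Ω : Set (Rn n))
    (hs : 0 < s) (hs1 : s < 1) (hn : 4 * s < (n : ℝ))
    (hα : 0 < α) (hα2 : α < 2 * s)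
    (hΩo : IsOpen Ω) (hΩc : IsConnected Ω) (hΩb : Bornology.IsBounded Ω)
    (h0 : (0 : Rn n) ∈ Ω)
    (φ : Rn n → ℝ) (hφ : ContDiff ℝ (⊤ : ℕ∞) φ) (hφc : HasCompactSupport φ)
    (hφsupp : tsupport φ ⊆ Ω)
    (u : Rn n → ℝ) (hu : Measurable u)
    (hgag : gagSq n s Set.univ u < ⊤)
    (hhardy : hardyInt n s α Set.univ u < ⊤)
    (C : ℝ) (hC : 0 < C)
    (hdecay : ∀ x : Rn n, 1 ≤ ‖x‖ → |u x| ≤ C / ‖x‖ ^ ((n : ℝ) - 2 * s)) :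
    memHs n s Ω (fun x => φ x * u x) := by
  have hn0 : (0:ℝ) < n := by linarith
  have hnn : 0 < n := by exact_mod_cast hn0
  haveI : NeZero n := ⟨hnn.ne'⟩
  haveI : Nontrivial (Rn n) := inferInstance
  have hn2s : (0:ℝ) < (n:ℝ) - 2*s := by linarith
  set p : ℝ := 2 * ((n:ℝ) - α) / ((n:ℝ) - 2 * s) with hp
  have hp2 : 2 ≤ p := by
    rw [hp, le_div_iff₀ hn2s]; linarith
  -- bound on φ
  obtain ⟨M, hM⟩ := hφc.exists_bound_of_continuous hφ.continuous
  have hM0 : 0 ≤ M := le_trans (norm_nonneg _) (hM 0)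
  -- a.e. nonzero
  have h0ae : ∀ᵐ y ∂(volume.restrict Ω), y ≠ (0 : Rn n) := by
    refine (ae_iff.2 ?_)
    have : {y : Rn n | ¬ y ≠ 0} = {(0 : Rn n)} := by ext y; simp
    rw [this]
    exact le_antisymm ((Measure.restrict_apply_le _ _).trans_eq (measure_singleton _)) zero_le
  -- finite measure of Ω
  have hΩvol : volume Ω < ⊤ := hΩb.measure_lt_top
  -- Step A : squared integral finite
  have hI2 : ∫⁻ y in Ω, ENNReal.ofReal ((u y)^2) < ⊤ := by
    have hptwise : ∀ y : Rn n, y ≠ 0 →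
        ENNReal.ofReal ((u y)^2) ≤
          ENNReal.ofReal (|u y| ^ p / ‖y‖ ^ α) + ENNReal.ofReal (1 + C^2) := by
      intro y hy
      have hdiv0 : 0 ≤ |u y| ^ p / ‖y‖ ^ α := by positivity
      rcases le_or_gt 1 ‖y‖ with h1 | h1
      · refine le_trans (ENNReal.ofReal_le_ofReal ?_) le_add_self
        have hd1 : (1:ℝ) ≤ ‖y‖ ^ ((n:ℝ) - 2*s) :=
          Real.one_le_rpow h1 hn2s.le
        have : |u y| ≤ C := (hdecay y h1).trans (div_le_self hC.le hd1)
        calc (u y)^2 = |u y|^2 := (sq_abs _).symm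
          _ ≤ C^2 := by nlinarith [abs_nonneg (u y)]
          _ ≤ 1 + C^2 := by linarith
      · have hy0 : 0 < ‖y‖ := norm_pos_iff.2 hy
        rcases le_or_gt (|u y|) 1 with h2 | h2
        · refine le_trans (ENNReal.ofReal_le_ofReal ?_) le_add_self
          calc (u y)^2 = |u y|^2 := (sq_abs _).symm
            _ ≤ 1 := by nlinarith [abs_nonneg (u y)]
            _ ≤ 1 + C^2 := by nlinarith
        · refine le_trans (ENNReal.ofReal_le_ofReal ?_) le_self_add
          have e1 : (u y)^2 = |u y| ^ (2:ℝ) := by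
            rw [Real.rpow_two, sq_abs]
          have e2 : |u y| ^ (2:ℝ) ≤ |u y| ^ p :=
            Real.rpow_le_rpow_of_exponent_le h2.le hp2
          have e3 : |u y| ^ p ≤ |u y| ^ p / ‖y‖ ^ α := by
            refine le_div_self (by positivity) (by positivity) ?_
            exact Real.rpow_le_one (norm_nonneg _) h1.le hα.le
          linarith [e1 ▸ e2]
    calc ∫⁻ y in Ω, ENNReal.ofReal ((u y)^2)
        ≤ ∫⁻ y in Ω, (ENNReal.ofReal (|u y| ^ p / ‖y‖ ^ α) + ENNReal.ofReal (1 + C^2)) := by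
          refine lintegral_mono_ae ?_
          filter_upwards [h0ae] with y hy using hptwise y hy
      _ = (∫⁻ y in Ω, ENNReal.ofReal (|u y| ^ p / ‖y‖ ^ α)) + ENNReal.ofReal (1 + C^2) * volume Ω := by
          rw [lintegral_add_right _ measurable_const, setLIntegral_const]
      _ < ⊤ := by
          refine ENNReal.add_lt_top.2 ⟨?_, ENNReal.mul_lt_top ofReal_lt_top hΩvol⟩
          refine lt_of_le_of_lt ?_ hhardy
          rw [hardyInt, Measure.restrict_univ]
          exact setLIntegral_le_lintegral _ _
  -- Memℒp part
  have humem : MemLp u 2 (volume.restrict Ω) := by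
    refine (memLp_two_iff_integrable_sq (hu.aestronglyMeasurable)).2 ?_
    refine ⟨(hu.pow_const 2).aestronglyMeasurable, ?_⟩
    rw [hasFiniteIntegral_iff_ofReal (Eventually.of_forall fun y => sq_nonneg _)]
    exact hI2
  have hmem : MemLp (fun x => φ x * u x) 2 (volume.restrict Ω) := by
    refine MemLp.of_le (humem.const_mul M) ((hφ.continuous.measurable.mul hu).aestronglyMeasurable) ?_
    refine Eventually.of_forall fun x => ?_
    have h := mul_le_mul_of_nonneg_right ((hM x).trans (le_abs_self M)) (abs_nonneg (u x))
    simpa [Real.norm_eq_abs, abs_mul] using h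
  refine ⟨hmem, ?_⟩
  -- Lipschitz constant
  obtain ⟨L, hL⟩ := ContDiff.lipschitzWith_of_hasCompactSupport hφc hφ (by simp)
  set β : ℝ := (n:ℝ) + 2 * s with hβ
  have hβpos : 0 < β := by positivity
  have hβ2 : 0 < β - 2 → True := fun _ => trivial
  set g : Rn n → ℝ≥0∞ :=
    fun z => ENNReal.ofReal (min ((L:ℝ)^2 * ‖z‖^2) (4*M^2) / ‖z‖ ^ β) with hg
  have hgsymm : ∀ x y : Rn n, g (x - y) = g (y - x) := by
    intro x y; simp only [hg]; rw [norm_sub_rev]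
  -- K finite
  set K : ℝ≥0∞ := ∫⁻ z, g z with hKdef
  have hK : K < ⊤ := by
    rw [hKdef, ← lintegral_add_compl (f := g) (measurableSet_ball (x := (0:Rn n)) (ε := 1))]
    refine ENNReal.add_lt_top.2 ⟨?_, ?_⟩
    · -- ball part
      have hle : ∀ z : Rn n, g z ≤
          ENNReal.ofReal ((L:ℝ)^2) * ENNReal.ofReal (‖z‖ ^ ((2:ℝ) - β)) := by
        intro z
        rcases eq_or_ne z 0 with rfl | hz
        · simp [hg, Real.zero_rpow hβpos.ne']
        · have hz0 : (0:ℝ) < ‖z‖ := norm_pos_iff.2 hz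
          rw [hg, ← ENNReal.ofReal_mul (by positivity)]
          apply ENNReal.ofReal_le_ofReal
          have e : ‖z‖ ^ ((2:ℝ) - β) = ‖z‖^2 / ‖z‖ ^ β := by
            rw [Real.rpow_sub hz0, Real.rpow_two]
          calc min ((L:ℝ)^2 * ‖z‖^2) (4*M^2) / ‖z‖ ^ β
              ≤ ((L:ℝ)^2 * ‖z‖^2) / ‖z‖ ^ β := by
                gcongr
                exact min_le_left _ _
            _ = (L:ℝ)^2 * (‖z‖^2 / ‖z‖ ^ β) := mul_div_assoc _ _ _
            _ = (L:ℝ)^2 * ‖z‖ ^ ((2:ℝ) - β) := by rw [e]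
      calc ∫⁻ z in Metric.ball (0:Rn n) 1, g z
          ≤ ∫⁻ z in Metric.ball (0:Rn n) 1,
              ENNReal.ofReal ((L:ℝ)^2) * ENNReal.ofReal (‖z‖ ^ ((2:ℝ) - β)) :=
            lintegral_mono fun z => hle z
        _ = ENNReal.ofReal ((L:ℝ)^2) *
              ∫⁻ z in Metric.ball (0:Rn n) 1, ENNReal.ofReal (‖z‖ ^ ((2:ℝ) - β)) :=
            lintegral_const_mul' _ _ ofReal_ne_top
        _ < ⊤ := by
            refine ENNReal.mul_lt_top ofReal_lt_top ?_
            have h2β : ((2:ℝ) - β) = -(β - 2) := by ring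
            rw [h2β]
            exact aux_ball_rpow n (by simp only [hβ]; linarith)
    · -- complement part
      have hle : ∀ z : Rn n, z ∈ (Metric.ball (0:Rn n) 1)ᶜ →
          g z ≤ ENNReal.ofReal (4*M^2 * 2^β) * ENNReal.ofReal ((1 + ‖z‖) ^ (-β)) := by
        intro z hz
        have hz1 : (1:ℝ) ≤ ‖z‖ := by
          simp only [Set.mem_compl_iff, Metric.mem_ball, dist_zero_right, not_lt] at hz
          exact hz
        have hz0 : (0:ℝ) < ‖z‖ := lt_of_lt_of_le one_pos hz1
        rw [hg, ← ENNReal.ofReal_mul (by positivity)]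
        apply ENNReal.ofReal_le_ofReal
        have hb : (1 + ‖z‖) ^ β ≤ ((2:ℝ)*‖z‖) ^ β :=
          Real.rpow_le_rpow (by positivity) (by linarith) hβpos.le
        calc min ((L:ℝ)^2 * ‖z‖^2) (4*M^2) / ‖z‖ ^ β
            ≤ (4*M^2) / ‖z‖ ^ β := by
              gcongr
              exact min_le_right _ _
          _ ≤ 4*M^2 * 2^β * (1 + ‖z‖) ^ (-β) := by
              rw [Real.rpow_neg (by positivity), ← div_eq_mul_inv,
                div_le_div_iff₀ (by positivity) (by positivity)]
              calc 4*M^2 * (1 + ‖z‖)^β ≤ 4*M^2 * ((2:ℝ)*‖z‖)^β := by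
                    exact mul_le_mul_of_nonneg_left hb (by positivity)
                _ = 4*M^2*(2:ℝ)^β * ‖z‖^β := by
                    rw [Real.mul_rpow (by norm_num) (norm_nonneg _)]; ring
      calc ∫⁻ z in (Metric.ball (0:Rn n) 1)ᶜ, g z
          ≤ ∫⁻ z in (Metric.ball (0:Rn n) 1)ᶜ,
              ENNReal.ofReal (4*M^2 * 2^β) * ENNReal.ofReal ((1 + ‖z‖) ^ (-β)) :=
            setLIntegral_mono_ae (by fun_prop) (Eventually.of_forall hle)
        _ = ENNReal.ofReal (4*M^2 * 2^β) *
              ∫⁻ z in (Metric.ball (0:Rn n) 1)ᶜ, ENNReal.ofReal ((1 + ‖z‖) ^ (-β)) :=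
            lintegral_const_mul' _ _ ofReal_ne_top
        _ ≤ ENNReal.ofReal (4*M^2 * 2^β) *
              ∫⁻ z : Rn n, ENNReal.ofReal ((1 + ‖z‖) ^ (-β)) := by
            gcongr
            exact Measure.restrict_le_self
        _ < ⊤ := by
            refine ENNReal.mul_lt_top ofReal_lt_top ?_
            refine finite_integral_one_add_norm ?_
            rw [finrank_euclideanSpace_fin, hβ]
            linarith
  -- pointwise estimate
  set c1 : ℝ≥0∞ := ENNReal.ofReal (2*M^2) with hc1
  have hpoint : ∀ x y : Rn n,
      ENNReal.ofReal (|φ x * u x - φ y * u y| ^ 2 / ‖x - y‖ ^ β) ≤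
        c1 * ENNReal.ofReal (|u x - u y| ^ 2 / ‖x - y‖ ^ β)
          + ENNReal.ofReal (2 * (u x)^2) * g (x - y) := by
    intro x y
    have hreal : |φ x * u x - φ y * u y| ^ 2 / ‖x - y‖ ^ β ≤
        2*M^2 * (|u x - u y| ^ 2 / ‖x - y‖ ^ β)
          + 2*(u x)^2 * (min ((L:ℝ)^2 * ‖x - y‖^2) (4*M^2) / ‖x - y‖ ^ β) := by
      rw [← mul_div_assoc, ← mul_div_assoc, ← add_div]
      rcases eq_or_lt_of_le (Real.rpow_nonneg (norm_nonneg (x - y)) β) with hd | hd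
      · simp [← hd]
      · rw [div_le_div_iff₀ hd hd]
        refine mul_le_mul_of_nonneg_right ?_ hd.le
        -- numerator inequality
        have hMy : |φ y| ≤ M := by rw [← Real.norm_eq_abs]; exact hM y
        have hMx : |φ x| ≤ M := by rw [← Real.norm_eq_abs]; exact hM x
        have hlip : |φ x - φ y| ≤ (L:ℝ) * ‖x - y‖ := by
          have h := hL.dist_le_mul x y
          rwa [Real.dist_eq, dist_eq_norm] at h
        have hmin : (φ x - φ y)^2 ≤ min ((L:ℝ)^2 * ‖x - y‖^2) (4*M^2) := by
          refine le_min ?_ ?_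
          · calc (φ x - φ y)^2 = |φ x - φ y|^2 := (sq_abs _).symm
              _ ≤ ((L:ℝ) * ‖x - y‖)^2 := pow_le_pow_left₀ (abs_nonneg _) hlip 2
              _ = (L:ℝ)^2 * ‖x - y‖^2 := by ring
          · calc (φ x - φ y)^2 = |φ x - φ y|^2 := (sq_abs _).symm
              _ ≤ (2*M)^2 := by
                refine pow_le_pow_left₀ (abs_nonneg _) ?_ 2
                calc |φ x - φ y| ≤ |φ x| + |φ y| := abs_sub _ _
                  _ ≤ 2*M := by linarith
              _ = 4*M^2 := by ring
        calc |φ x * u x - φ y * u y|^2 = |φ x * u x - φ y * u y|^2 := rfl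
          _ ≤ 2*M^2*|u x - u y|^2 + 2*(u x)^2 * min ((L:ℝ)^2 * ‖x - y‖^2) (4*M^2) :=
              aux_num (φ x) (φ y) (u x) (u y) M _ hMy hmin
    calc ENNReal.ofReal (|φ x * u x - φ y * u y| ^ 2 / ‖x - y‖ ^ β)
        ≤ ENNReal.ofReal (2*M^2 * (|u x - u y| ^ 2 / ‖x - y‖ ^ β)
            + 2*(u x)^2 * (min ((L:ℝ)^2 * ‖x - y‖^2) (4*M^2) / ‖x - y‖ ^ β)) :=
          ENNReal.ofReal_le_ofReal hreal
      _ ≤ ENNReal.ofReal (2*M^2 * (|u x - u y| ^ 2 / ‖x - y‖ ^ β))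
            + ENNReal.ofReal (2*(u x)^2 * (min ((L:ℝ)^2 * ‖x - y‖^2) (4*M^2) / ‖x - y‖ ^ β)) :=
          ENNReal.ofReal_add_le
      _ = c1 * ENNReal.ofReal (|u x - u y| ^ 2 / ‖x - y‖ ^ β)
            + ENNReal.ofReal (2 * (u x)^2) * g (x - y) := by
          rw [hc1, hg, ← ENNReal.ofReal_mul (by positivity), ← ENNReal.ofReal_mul (by positivity)]
  -- measurability facts
  have hPmeas : Measurable (Function.uncurry fun x y : Rn n =>
      ENNReal.ofReal (|u x - u y| ^ 2 / ‖x - y‖ ^ β)) := by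
    unfold Function.uncurry
    fun_prop
  have hgagO : gagSq n s Ω u ≤ gagSq n s Set.univ u := by
    refine lintegral_mono' (Measure.restrict_mono (Set.subset_univ _) le_rfl) fun x => ?_
    exact lintegral_mono' (Measure.restrict_mono (Set.subset_univ _) le_rfl) le_rfl
  have hIxmeas : Measurable (fun x : Rn n =>
      ∫⁻ y in Ω, ENNReal.ofReal (|u x - u y| ^ 2 / ‖x - y‖ ^ β)) :=
    Measurable.lintegral_prod_right hPmeas
  have hJle : ∀ x : Rn n, ∫⁻ y in Ω, g (x - y) ≤ K := by
    intro x
    calc ∫⁻ y in Ω, g (x - y) ≤ ∫⁻ y, g (x - y) := setLIntegral_le_lintegral _ _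
      _ = ∫⁻ y, g (y - x) := lintegral_congr fun y => by rw [hgsymm]
      _ = ∫⁻ z, g z := lintegral_sub_right_eq_self (fun z => g z) x
      _ = K := rfl
  have hfin2 : ∫⁻ x in Ω, ENNReal.ofReal (2 * (u x)^2) < ⊤ := by
    have he : ∀ x : Rn n, ENNReal.ofReal (2 * (u x)^2)
        = ENNReal.ofReal 2 * ENNReal.ofReal ((u x)^2) :=
      fun x => ENNReal.ofReal_mul (by norm_num)
    calc ∫⁻ x in Ω, ENNReal.ofReal (2 * (u x)^2)
        = ENNReal.ofReal 2 * ∫⁻ x in Ω, ENNReal.ofReal ((u x)^2) := by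
          rw [← lintegral_const_mul' _ _ ofReal_ne_top]
          exact lintegral_congr fun x => he x
      _ < ⊤ := ENNReal.mul_lt_top ofReal_lt_top hI2
  have hc1ne : c1 ≠ ⊤ := by rw [hc1]; exact ofReal_ne_top
  calc gagSq n s Ω (fun x => φ x * u x)
      = ∫⁻ x in Ω, ∫⁻ y in Ω,
          ENNReal.ofReal (|φ x * u x - φ y * u y| ^ 2 / ‖x - y‖ ^ β) := rfl
    _ ≤ ∫⁻ x in Ω, ∫⁻ y in Ω, (c1 * ENNReal.ofReal (|u x - u y| ^ 2 / ‖x - y‖ ^ β)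
          + ENNReal.ofReal (2 * (u x)^2) * g (x - y)) :=
        lintegral_mono fun x => lintegral_mono fun y => hpoint x y
    _ = ∫⁻ x in Ω, ((c1 * ∫⁻ y in Ω, ENNReal.ofReal (|u x - u y| ^ 2 / ‖x - y‖ ^ β))
          + ENNReal.ofReal (2 * (u x)^2) * ∫⁻ y in Ω, g (x - y)) := by
        refine lintegral_congr fun x => ?_
        rw [lintegral_add_left' ((Measurable.const_mul (by fun_prop) c1).aemeasurable) _,
          lintegral_const_mul' _ _ hc1ne, lintegral_const_mul' _ _ ofReal_ne_top]
    _ ≤ ∫⁻ x in Ω, ((c1 * ∫⁻ y in Ω, ENNReal.ofReal (|u x - u y| ^ 2 / ‖x - y‖ ^ β))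
          + ENNReal.ofReal (2 * (u x)^2) * K) := by
        refine lintegral_mono fun x => ?_
        gcongr
        exact hJle x
    _ = c1 * gagSq n s Ω u + (∫⁻ x in Ω, ENNReal.ofReal (2 * (u x)^2)) * K := by
        rw [lintegral_add_left' ((hIxmeas.const_mul c1).aemeasurable) _,
          lintegral_const_mul' _ _ hc1ne, lintegral_mul_const' _ _ hK.ne]
        rfl
    _ < ⊤ := by
        refine ENNReal.add_lt_top.2 ⟨?_, ?_⟩
        · refine ENNReal.mul_lt_top ?_ (lt_of_le_of_lt hgagO hgag)
          rw [hc1]; exact ofReal_lt_top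
        · exact ENNReal.mul_lt_top hfin2 hK
end
end

section
/- Let n ∈ ℕ, 0 < s < 1, n > 4s, 0 < α < 2s, and let Ω ⊂ ℝⁿ be a bounded domain with 0 ∈ Ω. Assume μ_{α,λ'}(Ω) ≤ μ_α for every λ' > 0, and suppose there exists λ̄ > 0 with μ_{α,λ̄}(Ω) = μ_α. Then for every λ > λ̄ the infimum μ_{α,λ}(Ω) is not attained: there is no u ∈ H^s(Ω) with ∫_Ω |u(x)|^{2_{s,α}}/|x|^α dx = 1 and [u]_{s,Ω}² + λ∫_Ω |u|² dx = μ_{α,λ}(Ω). -/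
/-!
If some `u` attained `μ_{α,λ}(Ω)` with `λ > λ̄`, then
`E_λ(u) = μ_{α,λ}(Ω) ≤ μ_α = μ_{α,λ̄}(Ω) ≤ E_λ̄(u) = E_λ(u) - (λ - λ̄) ∫_Ω u²`,
so `∫_Ω u² = 0`. Then `u = 0` a.e. on `Ω` and its Hardy integral vanishes, contradicting the
normalisation `∫_Ω |u|^{2_{s,α}}/|x|^α = 1`.
-/

open MeasureTheory ENNReal Filter Topology

noncomputable section

theorem MeasureTheory.MemLp.ae_eq_zero_of_integral_sq_eq_zero {X : Type*} [MeasurableSpace X]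
    {μ : Measure X} {u : X → ℝ} (hu : MemLp u 2 μ) (h : ∫ x, u x ^ 2 ∂μ = 0) : u =ᵐ[μ] 0 := by
  have hsq : ∀ᵐ x ∂μ, u x ^ 2 = 0 :=
    (integral_eq_zero_iff_of_nonneg (fun x => sq_nonneg (u x)) hu.integrable_sq).mp h
  filter_upwards [hsq] with x hx
  exact pow_eq_zero_iff two_ne_zero |>.mp hx

section FractionalHardy

variable {n : ℕ} {s α : ℝ} {U : Set (Rn n)} {u : Rn n → ℝ}

theorem hardyInt_eq_zero_of_ae_eq_zero
    (hp : 2 * ((n : ℝ) - α) / ((n : ℝ) - 2 * s) ≠ 0) (hu : u =ᵐ[volume.restrict U] 0) :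
    hardyInt n s α U u = 0 := by
  rw [hardyInt, ← lintegral_zero]
  refine lintegral_congr_ae ?_
  filter_upwards [hu] with x hx
  simp [show u x = 0 from hx, Real.zero_rpow hp]

theorem energy_eq_add (lam lam' : ℝ) :
    energy n s lam' U u = energy n s lam U u + (lam' - lam) * ∫ x in U, u x ^ 2 := by
  unfold energy
  ring

theorem energy_nonneg {lam : ℝ} (hlam : 0 ≤ lam) : 0 ≤ energy n s lam U u :=
  add_nonneg toReal_nonneg (mul_nonneg hlam (integral_nonneg fun _ => sq_nonneg _))

theorem mu_le_energy {lam : ℝ} (hlam : 0 ≤ lam) (hu : memHs n s U u)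
    (hH : hardyInt n s α U u = 1) : mu n s α lam U ≤ energy n s lam U u := by
  refine csInf_le ⟨0, ?_⟩ ⟨u, hu, hH, rfl⟩
  rintro c ⟨v, -, -, rfl⟩
  exact energy_nonneg hlam

end FractionalHardy

theorem stmt_9_general (n : ℕ) (s α : ℝ) (Ω : Set (Rn n))
    (hs : 0 < s) (hn : 4 * s < (n : ℝ))
    (hα2 : α < 2 * s)
    (hle : ∀ lam' : ℝ, 0 < lam' → mu n s α lam' Ω ≤ muGlob n s α)
    (lamBar : ℝ) (hlamBar : 0 < lamBar)
    (heq : mu n s α lamBar Ω = muGlob n s α) :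
    ∀ lam : ℝ, lamBar < lam →
      ¬ ∃ u : Rn n → ℝ, memHs n s Ω u ∧ hardyInt n s α Ω u = 1 ∧
        energy n s lam Ω u = mu n s α lam Ω := by
  rintro lam hlam ⟨u, hu, hH, hE⟩
  have hgap : energy n s lam Ω u ≤ energy n s lamBar Ω u :=
    calc energy n s lam Ω u = mu n s α lam Ω := hE
      _ ≤ muGlob n s α := hle lam (hlamBar.trans hlam)
      _ = mu n s α lamBar Ω := heq.symm
      _ ≤ energy n s lamBar Ω u := mu_le_energy hlamBar.le hu hH
  have hL2 : ∫ x in Ω, u x ^ 2 = 0 := by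
    have hnonneg : 0 ≤ ∫ x in Ω, u x ^ 2 := integral_nonneg fun _ => sq_nonneg _
    rw [energy_eq_add lamBar lam] at hgap
    nlinarith
  have hp : 2 * ((n : ℝ) - α) / ((n : ℝ) - 2 * s) ≠ 0 :=
    (div_pos (by linarith) (by linarith)).ne'
  have hzero := hardyInt_eq_zero_of_ae_eq_zero hp (hu.1.ae_eq_zero_of_integral_sq_eq_zero hL2)
  exact zero_ne_one (hzero.symm.trans hH)

/-- If `μ_{α,λ'}(Ω) ≤ μ_α` for all `λ' > 0` and `μ_{α,λ̄}(Ω) = μ_α` for some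
`λ̄ > 0`, then for every `λ > λ̄` the infimum `μ_{α,λ}(Ω)` is not attained. -/
theorem stmt_9 (n : ℕ) (s α : ℝ) (Ω : Set (Rn n))
    (hs : 0 < s) (hs1 : s < 1) (hn : 4 * s < (n : ℝ))
    (hα : 0 < α) (hα2 : α < 2 * s)
    (hΩo : IsOpen Ω) (hΩc : IsConnected Ω) (hΩb : Bornology.IsBounded Ω)
    (h0 : (0 : Rn n) ∈ Ω)
    (hle : ∀ lam' : ℝ, 0 < lam' → mu n s α lam' Ω ≤ muGlob n s α)
    (lamBar : ℝ) (hlamBar : 0 < lamBar)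
    (heq : mu n s α lamBar Ω = muGlob n s α) :
    ∀ lam : ℝ, lamBar < lam →
      ¬ ∃ u : Rn n → ℝ, memHs n s Ω u ∧ hardyInt n s α Ω u = 1 ∧
        energy n s lam Ω u = mu n s α lam Ω :=
  stmt_9_general n s α Ω hs hn hα2 hle lamBar hlamBar heq
end
end

section
/- Let n ∈ ℕ, 0 < s < 1, n > 4s, 0 < α < 2s. Let u₀ : ℝⁿ → [0,∞) be measurable with ∫_{ℝⁿ} u₀(x)^{2_{s,α}}/|x|^α dx < ∞ and u₀(x) ≤ C/|x|^{n−2s} for all |x| ≥ 1 (for some C > 0). Let Ω ⊂ ℝⁿ be a bounded open set and φ ∈ C_c^∞(ℝⁿ) with 0 ≤ φ ≤ 1. Then lim_{ε→0} ∫_{ε^{−1}Ω × ε^{−1}Ω} u₀(x)² |φ(εx)−φ(εy)|² / |x−y|^{n+2s} dx dy = 0. -/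
open MeasureTheory ENNReal Filter Topology Pointwise

noncomputable section

section Aux

lemma tailFin (n : ℕ) {p : ℝ} (hp : (n:ℝ) < p) :
    ∫⁻ z : Rn n in (Metric.ball 0 1)ᶜ, ENNReal.ofReal (‖z‖ ^ (-p)) < ⊤ := by
  have hbd : ∀ z : Rn n, z ∈ (Metric.ball (0:Rn n) 1)ᶜ →
      ENNReal.ofReal (‖z‖ ^ (-p)) ≤ ENNReal.ofReal ((2:ℝ)^p * (1 + ‖z‖) ^ (-p)) := by
    intro z hz
    have h1 : (1:ℝ) ≤ ‖z‖ := by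
      simpa [Metric.mem_ball, dist_eq_norm] using hz
    have hz0 : (0:ℝ) < ‖z‖ := lt_of_lt_of_le one_pos h1
    apply ENNReal.ofReal_le_ofReal
    have key : ((2:ℝ) * ‖z‖) ^ (-p) ≤ (1 + ‖z‖) ^ (-p) :=
      Real.rpow_le_rpow_of_nonpos (by positivity) (by linarith) (by linarith)
    have h2 : ((2:ℝ) * ‖z‖) ^ (-p) = (2:ℝ)^(-p) * ‖z‖ ^ (-p) :=
      Real.mul_rpow (by norm_num) (norm_nonneg z)
    calc ‖z‖ ^ (-p) = (2:ℝ)^p * ((2:ℝ) * ‖z‖) ^ (-p) := by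
          rw [h2, ← mul_assoc, ← Real.rpow_add (by norm_num)]
          simp
      _ ≤ (2:ℝ)^p * (1 + ‖z‖) ^ (-p) := by
          apply mul_le_mul_of_nonneg_left key (by positivity)
  calc ∫⁻ z : Rn n in (Metric.ball 0 1)ᶜ, ENNReal.ofReal (‖z‖ ^ (-p))
      ≤ ∫⁻ z : Rn n in (Metric.ball 0 1)ᶜ, ENNReal.ofReal ((2:ℝ)^p * (1 + ‖z‖) ^ (-p)) :=
        setLIntegral_mono' (Metric.isOpen_ball.isClosed_compl).measurableSet hbd
    _ ≤ ∫⁻ z : Rn n, ENNReal.ofReal ((2:ℝ)^p * (1 + ‖z‖) ^ (-p)) :=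
        lintegral_mono' Measure.restrict_le_self le_rfl
    _ = ENNReal.ofReal ((2:ℝ)^p) * ∫⁻ z : Rn n, ENNReal.ofReal ((1 + ‖z‖) ^ (-p)) := by
        simp_rw [ENNReal.ofReal_mul (by positivity : (0:ℝ) ≤ (2:ℝ)^p)]
        exact lintegral_const_mul' _ _ ENNReal.ofReal_ne_top
    _ < ⊤ := by
        apply ENNReal.mul_lt_top ENNReal.ofReal_lt_top
        have := finite_integral_one_add_norm (E := Rn n) (μ := volume) (r := p) ?_
        · exact this
        · rw [finrank_euclideanSpace_fin]; exact hp

lemma ballFin (n : ℕ) {r : ℝ} (hr : -(n:ℝ) < r) :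
    ∫⁻ z : Rn n in Metric.ball 0 1, ENNReal.ofReal (‖z‖ ^ r) < ⊤ := by
  rcases le_or_gt 0 r with hr0 | hr0
  · calc ∫⁻ z : Rn n in Metric.ball 0 1, ENNReal.ofReal (‖z‖ ^ r)
        ≤ ∫⁻ _ : Rn n in Metric.ball 0 1, 1 := by
          apply setLIntegral_mono' measurableSet_ball
          intro z hz
          simp only [Metric.mem_ball, dist_eq_norm, sub_zero] at hz
          simpa using ENNReal.ofReal_le_ofReal
            (Real.rpow_le_one (norm_nonneg z) hz.le hr0)
      _ = volume (Metric.ball (0 : Rn n) 1) := by simp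
      _ < ⊤ := measure_ball_lt_top
  · set A : ℕ → Set (Rn n) :=
      fun k => Metric.ball 0 ((1/2:ℝ)^k) \ Metric.ball 0 ((1/2:ℝ)^(k+1)) with hA
    have hcover : Metric.ball (0 : Rn n) 1 \ {0} ⊆ ⋃ k, A k := by
      intro z hz
      obtain ⟨hz1, hz0⟩ := hz
      simp only [Metric.mem_ball, dist_eq_norm, sub_zero] at hz1
      have hzpos : 0 < ‖z‖ := norm_pos_iff.mpr (by simpa using hz0)
      have hex : ∃ k : ℕ, (1/2:ℝ)^(k+1) ≤ ‖z‖ := by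
        obtain ⟨k, hk⟩ := exists_pow_lt_of_lt_one hzpos (by norm_num : (1/2:ℝ) < 1)
        refine ⟨k, le_trans ?_ hk.le⟩
        exact pow_le_pow_of_le_one (by norm_num) (by norm_num) (by omega)
      classical
      set k := Nat.find hex with hkdef
      refine Set.mem_iUnion.2 ⟨k, ?_, ?_⟩
      · simp only [Metric.mem_ball, dist_eq_norm, sub_zero]
        rcases Nat.eq_zero_or_pos k with hk0 | hk0
        · rw [hk0]; simpa using hz1
        · have hmin := Nat.find_min hex (m := k - 1) (by omega)
          push_neg at hmin
          have hkk : k - 1 + 1 = k := by omega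
          rwa [hkk] at hmin
      · simp only [Metric.mem_ball, dist_eq_norm, sub_zero, not_lt]
        exact Nat.find_spec hex
    have hshell : ∀ k : ℕ, ∫⁻ z : Rn n in A k, ENNReal.ofReal (‖z‖ ^ r)
        ≤ ENNReal.ofReal (((1/2:ℝ)^(k+1)) ^ r) * volume (Metric.ball (0:Rn n) ((1/2:ℝ)^k)) := by
      intro k
      have hmeas : MeasurableSet (A k) := measurableSet_ball.diff measurableSet_ball
      calc ∫⁻ z : Rn n in A k, ENNReal.ofReal (‖z‖ ^ r)
          ≤ ∫⁻ _ : Rn n in A k, ENNReal.ofReal (((1/2:ℝ)^(k+1)) ^ r) := by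
            apply setLIntegral_mono' hmeas
            intro z hz
            obtain ⟨_, hz2⟩ := hz
            simp only [Metric.mem_ball, dist_eq_norm, sub_zero, not_lt] at hz2
            exact ENNReal.ofReal_le_ofReal
              (Real.rpow_le_rpow_of_nonpos (by positivity) hz2 hr0.le)
        _ = ENNReal.ofReal (((1/2:ℝ)^(k+1)) ^ r) * volume (A k) := by
            rw [setLIntegral_const]
        _ ≤ _ := mul_le_mul_right (measure_mono Set.diff_subset) _
    have hn : 0 < n := by
      rcases Nat.eq_zero_or_pos n with h0 | h; · exfalso; rw [h0] at hr; push_cast at hr; linarith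
      exact h
    haveI : Nontrivial (Rn n) := by
      refine ⟨0, EuclideanSpace.single (⟨0, hn⟩ : Fin n) (1:ℝ), ?_⟩
      intro h
      have := congrArg (fun v : Rn n => v ⟨0, hn⟩) h
      simp [EuclideanSpace.single_apply] at this
    have hballval : ∀ k : ℕ, volume (Metric.ball (0:Rn n) ((1/2:ℝ)^k))
        = ENNReal.ofReal (((1/2:ℝ)^k)^n) * volume (Metric.ball (0:Rn n) 1) := by
      intro k
      rw [Measure.addHaar_ball volume _ (by positivity : (0:ℝ) ≤ (1/2:ℝ)^k),
        finrank_euclideanSpace_fin]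
    have hterm : ∀ k : ℕ, (((1/2:ℝ)^(k+1)) ^ r) * (((1/2:ℝ)^k)^n)
        = ((1/2:ℝ)^r) * (((1/2:ℝ)^((n:ℝ)+r))^k) := by
      intro k
      have h2 : (0:ℝ) < 1/2 := by norm_num
      rw [← Real.rpow_natCast ((1/2:ℝ)) (k+1), ← Real.rpow_natCast ((1/2:ℝ)) k,
        ← Real.rpow_natCast (((1/2:ℝ))^(k:ℝ)) n,
        ← Real.rpow_mul h2.le, ← Real.rpow_mul h2.le,
        ← Real.rpow_natCast (((1/2:ℝ))^((n:ℝ)+r)) k, ← Real.rpow_mul h2.le,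
        ← Real.rpow_add h2, ← Real.rpow_add h2]
      congr 1
      push_cast
      ring
    have hq1 : ((1/2:ℝ))^((n:ℝ)+r) < 1 := by
      apply Real.rpow_lt_one (by norm_num) (by norm_num)
      linarith
    have hsum : (∑' k : ℕ, ENNReal.ofReal (((1/2:ℝ)^(k+1)) ^ r)
          * volume (Metric.ball (0:Rn n) ((1/2:ℝ)^k))) < ⊤ := by
      have heq : ∀ k : ℕ, ENNReal.ofReal (((1/2:ℝ)^(k+1)) ^ r)
            * volume (Metric.ball (0:Rn n) ((1/2:ℝ)^k))
          = (ENNReal.ofReal ((1/2:ℝ)^r) * volume (Metric.ball (0:Rn n) 1))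
            * (ENNReal.ofReal (((1/2:ℝ))^((n:ℝ)+r)))^k := by
        intro k
        rw [hballval k, ← mul_assoc, ← ENNReal.ofReal_mul (by positivity), hterm k,
          ENNReal.ofReal_mul (by positivity), ← ENNReal.ofReal_pow (by positivity)]
        ring
      rw [tsum_congr heq, ENNReal.tsum_mul_left, ENNReal.tsum_geometric]
      apply ENNReal.mul_lt_top
      · exact ENNReal.mul_lt_top ENNReal.ofReal_lt_top measure_ball_lt_top
      · rw [ENNReal.inv_lt_top]
        rw [tsub_pos_iff_lt]
        exact ENNReal.ofReal_lt_one.mpr hq1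
    calc ∫⁻ z : Rn n in Metric.ball 0 1, ENNReal.ofReal (‖z‖ ^ r)
        = ∫⁻ z : Rn n in Metric.ball 0 1 \ {0}, ENNReal.ofReal (‖z‖ ^ r) := by
          haveI : NullSingletonClass (volume : Measure (Rn n)) := inferInstance
          refine (setLIntegral_congr ?_).symm
          have h0 : (volume : Measure (Rn n)) {0} = 0 := measure_singleton 0
          exact MeasureTheory.diff_null_ae_eq_self h0
      _ ≤ ∫⁻ z : Rn n in ⋃ k, A k, ENNReal.ofReal (‖z‖ ^ r) :=
          lintegral_mono_set hcover
      _ ≤ ∑' k : ℕ, ∫⁻ z : Rn n in A k, ENNReal.ofReal (‖z‖ ^ r) :=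
          lintegral_iUnion_le _ _
      _ ≤ ∑' k : ℕ, ENNReal.ofReal (((1/2:ℝ)^(k+1)) ^ r)
            * volume (Metric.ball (0:Rn n) ((1/2:ℝ)^k)) := ENNReal.tsum_le_tsum hshell
      _ < ⊤ := hsum

lemma kerMeas (n : ℕ) (p a : ℝ) :
    Measurable (fun z : Rn n => ENNReal.ofReal (min (a^2*‖z‖^2) 4 / ‖z‖ ^ p)) := by
  apply Measurable.ennreal_ofReal
  exact (((measurable_norm.pow_const 2).const_mul _).min measurable_const).div
    (measurable_norm.pow_const p)

lemma kernelFin (n : ℕ) {s : ℝ} (hs : 0 < s) (hs1 : s < 1) (a : ℝ) :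
    ∫⁻ z : Rn n, ENNReal.ofReal (min (a^2*‖z‖^2) 4 / ‖z‖ ^ ((n:ℝ)+2*s)) < ⊤ := by
  set p : ℝ := (n:ℝ) + 2*s with hp
  have hp0 : 0 < p := by positivity
  rw [← lintegral_add_compl _ (measurableSet_ball
      (x := (0 : Rn n)) (ε := 1)) (μ := volume)]
  apply ENNReal.add_lt_top.2
  constructor
  · calc ∫⁻ z : Rn n in Metric.ball 0 1, ENNReal.ofReal (min (a^2*‖z‖^2) 4 / ‖z‖ ^ p)
        ≤ ∫⁻ z : Rn n in Metric.ball 0 1, ENNReal.ofReal (a^2 * ‖z‖ ^ (2 - p)) := by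
          apply setLIntegral_mono' measurableSet_ball
          intro z _
          apply ENNReal.ofReal_le_ofReal
          rcases eq_or_ne z 0 with rfl | hz
          · have h0 : ‖(0:Rn n)‖ ^ p = 0 := by
              rw [norm_zero, Real.zero_rpow hp0.ne']
            rw [h0]
            simp only [_root_.div_zero]
            positivity
          · have hz0 : (0:ℝ) < ‖z‖ := norm_pos_iff.mpr hz
            have h1 : min (a^2*‖z‖^2) 4 / ‖z‖ ^ p ≤ (a^2*‖z‖^2) / ‖z‖ ^ p :=
              (div_le_div_iff_of_pos_right (Real.rpow_pos_of_pos hz0 p)).mpr (min_le_left _ _)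
            refine h1.trans (le_of_eq ?_)
            rw [mul_div_assoc, Real.rpow_sub hz0]
            norm_num [Real.rpow_two]
      _ = ENNReal.ofReal (a^2) * ∫⁻ z : Rn n in Metric.ball 0 1,
            ENNReal.ofReal (‖z‖ ^ (2 - p)) := by
          simp_rw [ENNReal.ofReal_mul (by positivity : (0:ℝ) ≤ a^2)]
          exact lintegral_const_mul' _ _ ENNReal.ofReal_ne_top
      _ < ⊤ := ENNReal.mul_lt_top ENNReal.ofReal_lt_top
          (ballFin n (by push_cast [hp]; linarith))
  · calc ∫⁻ z : Rn n in (Metric.ball 0 1)ᶜ, ENNReal.ofReal (min (a^2*‖z‖^2) 4 / ‖z‖ ^ p)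
        ≤ ∫⁻ z : Rn n in (Metric.ball 0 1)ᶜ, ENNReal.ofReal (4 * ‖z‖ ^ (-p)) := by
          apply setLIntegral_mono' measurableSet_ball.compl
          intro z hz
          have h1 : (1:ℝ) ≤ ‖z‖ := by
            simpa [Metric.mem_ball, dist_eq_norm] using hz
          have hz0 : (0:ℝ) < ‖z‖ := lt_of_lt_of_le one_pos h1
          apply ENNReal.ofReal_le_ofReal
          rw [Real.rpow_neg hz0.le, ← div_eq_mul_inv]
          exact (div_le_div_iff_of_pos_right (Real.rpow_pos_of_pos hz0 p)).mpr (min_le_right _ _)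
      _ = ENNReal.ofReal (4:ℝ) * ∫⁻ z : Rn n in (Metric.ball 0 1)ᶜ,
            ENNReal.ofReal (‖z‖ ^ (-p)) := by
          simp_rw [ENNReal.ofReal_mul (by norm_num : (0:ℝ) ≤ (4:ℝ))]
          exact lintegral_const_mul' _ _ ENNReal.ofReal_ne_top
      _ < ⊤ := ENNReal.mul_lt_top ENNReal.ofReal_lt_top
          (tailFin n (by push_cast [hp]; linarith))

lemma kernelScale (n : ℕ) {s : ℝ} (hs : 0 < s) (L : ℝ) {ε : ℝ} (hε : 0 < ε) :
    ∫⁻ z : Rn n, ENNReal.ofReal (min ((L*ε)^2*‖z‖^2) 4 / ‖z‖ ^ ((n:ℝ)+2*s))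
      = ENNReal.ofReal (ε ^ (2*s)) *
        ∫⁻ z : Rn n, ENNReal.ofReal (min (L^2*‖z‖^2) 4 / ‖z‖ ^ ((n:ℝ)+2*s)) := by
  set p : ℝ := (n:ℝ) + 2*s with hp
  have hp0 : 0 < p := by positivity
  have hptwise : ∀ z : Rn n, min ((L*ε)^2*‖z‖^2) 4 / ‖z‖ ^ p
      = ε ^ p * (min (L^2*‖ε • z‖^2) 4 / ‖ε • z‖ ^ p) := by
    intro z
    have hnorm : ‖ε • z‖ = ε * ‖z‖ := by
      rw [norm_smul, Real.norm_eq_abs, abs_of_pos hε]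
    rcases eq_or_ne z 0 with rfl | hz
    · simp [Real.zero_rpow hp0.ne']
    · have hz0 : (0:ℝ) < ‖z‖ := norm_pos_iff.mpr hz
      have hmin : (L*ε)^2*‖z‖^2 = L^2*(ε*‖z‖)^2 := by ring
      have hεp : (0:ℝ) < ε ^ p := Real.rpow_pos_of_pos hε p
      have hzp : (0:ℝ) < ‖z‖ ^ p := Real.rpow_pos_of_pos hz0 p
      rw [hnorm, Real.mul_rpow hε.le hz0.le, hmin]
      field_simp
  calc ∫⁻ z : Rn n, ENNReal.ofReal (min ((L*ε)^2*‖z‖^2) 4 / ‖z‖ ^ p)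
      = ∫⁻ z : Rn n, ENNReal.ofReal (ε ^ p) *
          ENNReal.ofReal (min (L^2*‖ε • z‖^2) 4 / ‖ε • z‖ ^ p) := by
        congr 1
        ext z
        rw [hptwise z, ENNReal.ofReal_mul (by positivity)]
    _ = ENNReal.ofReal (ε ^ p) *
          ∫⁻ z : Rn n, ENNReal.ofReal (min (L^2*‖ε • z‖^2) 4 / ‖ε • z‖ ^ p) :=
        lintegral_const_mul' _ _ ENNReal.ofReal_ne_top
    _ = ENNReal.ofReal (ε ^ p) * (ENNReal.ofReal |((ε ^ n : ℝ))⁻¹| *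
          ∫⁻ z : Rn n, ENNReal.ofReal (min (L^2*‖z‖^2) 4 / ‖z‖ ^ p)) := by
        congr 1
        have hmap : ∫⁻ z : Rn n, ENNReal.ofReal (min (L^2*‖ε • z‖^2) 4 / ‖ε • z‖ ^ p)
            = ∫⁻ w, ENNReal.ofReal (min (L^2*‖w‖^2) 4 / ‖w‖ ^ p)
                ∂(Measure.map (ε • · : Rn n → Rn n) volume) :=
          (lintegral_map (kerMeas n p L) (measurable_const_smul ε)).symm
        rw [hmap, Measure.map_addHaar_smul volume hε.ne', lintegral_smul_measure,
          finrank_euclideanSpace_fin, smul_eq_mul]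
    _ = ENNReal.ofReal (ε ^ (2*s)) *
          ∫⁻ z : Rn n, ENNReal.ofReal (min (L^2*‖z‖^2) 4 / ‖z‖ ^ p) := by
        rw [← mul_assoc, ← ENNReal.ofReal_mul (by positivity)]
        congr 2
        rw [abs_inv, abs_of_pos (pow_pos hε n), ← Real.rpow_natCast ε n,
          ← Real.rpow_neg hε.le, ← Real.rpow_add hε]
        congr 1
        rw [hp]; ring

lemma massFin (n : ℕ) {s α : ℝ} (hs : 0 < s) (hn : 4*s < (n:ℝ)) (hα : 0 < α) (hα2 : α < 2*s)
    (u₀ : Rn n → ℝ) (hmeas : Measurable u₀) (hpos : ∀ x, 0 ≤ u₀ x)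
    (hint : hardyInt n s α Set.univ u₀ < ⊤) (C : ℝ)
    (hdecay : ∀ x : Rn n, 1 ≤ ‖x‖ → u₀ x ≤ C / ‖x‖ ^ ((n : ℝ) - 2 * s)) :
    ∫⁻ x : Rn n, ENNReal.ofReal ((u₀ x)^2) < ⊤ := by
  have hn2s : 0 < (n:ℝ) - 2*s := by linarith
  set p : ℝ := 2 * ((n : ℝ) - α) / ((n : ℝ) - 2 * s) with hpdef
  have hp2 : (2:ℝ) ≤ p := by
    rw [hpdef, le_div_iff₀ hn2s]; linarith
  have hn0 : 0 < n := by
    by_contra h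
    push_neg at h
    interval_cases n
    · push_cast at hn; linarith
  haveI : Nontrivial (Rn n) := by
    refine ⟨0, EuclideanSpace.single (⟨0, hn0⟩ : Fin n) (1:ℝ), ?_⟩
    intro h
    have := congrArg (fun v : Rn n => v ⟨0, hn0⟩) h
    simp [EuclideanSpace.single_apply] at this
  haveI : NullSingletonClass (volume : Measure (Rn n)) := inferInstance
  rw [← lintegral_add_compl _ (measurableSet_ball (x := (0:Rn n)) (ε := 1)) (μ := volume)]
  apply ENNReal.add_lt_top.2
  constructor
  · have hae : ∀ᵐ x ∂(volume.restrict (Metric.ball (0:Rn n) 1)),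
        ENNReal.ofReal ((u₀ x)^2) ≤ ENNReal.ofReal (|u₀ x| ^ p / ‖x‖ ^ α) + 1 := by
      have h0 : ∀ᵐ x : Rn n ∂volume, x ≠ 0 := by
        rw [ae_iff]
        have : {x : Rn n | ¬ x ≠ 0} = {0} := by ext x; simp
        rw [this]
        exact measure_singleton 0
      filter_upwards [ae_restrict_mem measurableSet_ball, ae_restrict_of_ae h0] with x hx hx0
      simp only [Metric.mem_ball, dist_eq_norm, sub_zero] at hx
      rcases le_or_gt (u₀ x) 1 with h1 | h1
      · calc ENNReal.ofReal ((u₀ x)^2) ≤ ENNReal.ofReal 1 :=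
              ENNReal.ofReal_le_ofReal (pow_le_one₀ (hpos x) h1)
          _ = 1 := ENNReal.ofReal_one
          _ ≤ _ := le_add_self
      · have hx0' : (0:ℝ) < ‖x‖ := norm_pos_iff.mpr hx0
        have key : (u₀ x)^2 ≤ |u₀ x| ^ p / ‖x‖ ^ α := by
          have e1 : (u₀ x)^2 = (u₀ x) ^ ((2:ℕ):ℝ) := (Real.rpow_natCast _ 2).symm
          have e2 : (u₀ x) ^ ((2:ℕ):ℝ) ≤ (u₀ x) ^ p :=
            Real.rpow_le_rpow_of_exponent_le h1.le (by exact_mod_cast hp2)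
          have e3 : (u₀ x) ^ p ≤ (u₀ x) ^ p / ‖x‖ ^ α := by
            rw [le_div_iff₀ (Real.rpow_pos_of_pos hx0' α)]
            calc (u₀ x) ^ p * ‖x‖ ^ α ≤ (u₀ x) ^ p * 1 := by
                  apply mul_le_mul_of_nonneg_left
                    (Real.rpow_le_one (norm_nonneg x) hx.le hα.le)
                    (Real.rpow_nonneg (hpos x) p)
              _ = (u₀ x) ^ p := mul_one _
          rw [abs_of_nonneg (hpos x)]
          exact (e1 ▸ e2).trans e3
        exact le_trans (ENNReal.ofReal_le_ofReal key) le_self_add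
    calc ∫⁻ x in Metric.ball (0:Rn n) 1, ENNReal.ofReal ((u₀ x)^2)
        ≤ ∫⁻ x in Metric.ball (0:Rn n) 1, (ENNReal.ofReal (|u₀ x| ^ p / ‖x‖ ^ α) + 1) :=
          lintegral_mono_ae hae
      _ = (∫⁻ x in Metric.ball (0:Rn n) 1, ENNReal.ofReal (|u₀ x| ^ p / ‖x‖ ^ α))
            + volume (Metric.ball (0:Rn n) 1) := by
          rw [lintegral_add_right _ measurable_const]
          simp
      _ ≤ hardyInt n s α Set.univ u₀ + volume (Metric.ball (0:Rn n) 1) := by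
          gcongr
          rw [hardyInt, Measure.restrict_univ]
          exact lintegral_mono' Measure.restrict_le_self le_rfl
      _ < ⊤ := ENNReal.add_lt_top.2 ⟨hint, measure_ball_lt_top⟩
  · have hq : (n:ℝ) < ((n:ℝ) - 2*s) * 2 := by linarith
    calc ∫⁻ x in (Metric.ball (0:Rn n) 1)ᶜ, ENNReal.ofReal ((u₀ x)^2)
        ≤ ∫⁻ x in (Metric.ball (0:Rn n) 1)ᶜ,
            ENNReal.ofReal (C^2 * ‖x‖ ^ (-(((n:ℝ) - 2*s) * 2))) := by
          apply setLIntegral_mono' measurableSet_ball.compl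
          intro x hx
          have h1 : (1:ℝ) ≤ ‖x‖ := by
            simpa [Metric.mem_ball, dist_eq_norm] using hx
          have hx0 : (0:ℝ) < ‖x‖ := lt_of_lt_of_le one_pos h1
          apply ENNReal.ofReal_le_ofReal
          have e1 : (u₀ x)^2 ≤ (C / ‖x‖ ^ ((n:ℝ) - 2*s))^2 :=
            pow_le_pow_left₀ (hpos x) (hdecay x h1) 2
          refine e1.trans (le_of_eq ?_)
          rw [div_pow, ← Real.rpow_natCast (‖x‖ ^ ((n:ℝ)-2*s)) 2,
            ← Real.rpow_mul (norm_nonneg x), Real.rpow_neg (norm_nonneg x),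
            div_eq_mul_inv]
          norm_num
      _ = ENNReal.ofReal (C^2) * ∫⁻ x in (Metric.ball (0:Rn n) 1)ᶜ,
            ENNReal.ofReal (‖x‖ ^ (-(((n:ℝ) - 2*s) * 2))) := by
          simp_rw [ENNReal.ofReal_mul (by positivity : (0:ℝ) ≤ C^2)]
          exact lintegral_const_mul' _ _ ENNReal.ofReal_ne_top
      _ < ⊤ := ENNReal.mul_lt_top ENNReal.ofReal_lt_top (tailFin n hq)

end Aux

/-- For `u₀` with finite Hardy integral and decay `u₀(x) ≤ C/|x|^{n−2s}` for
`|x| ≥ 1`, and a cutoff `φ ∈ C_c^∞` with `0 ≤ φ ≤ 1`,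
`∫_{ε⁻¹Ω × ε⁻¹Ω} u₀(x)²|φ(εx)−φ(εy)|²/|x−y|^{n+2s} dx dy → 0` as `ε → 0⁺`. -/
theorem stmt_15 (n : ℕ) (s α : ℝ)
    (hs : 0 < s) (hs1 : s < 1) (hn : 4 * s < (n : ℝ))
    (hα : 0 < α) (hα2 : α < 2 * s)
    (u₀ : Rn n → ℝ) (hmeas : Measurable u₀) (hpos : ∀ x, 0 ≤ u₀ x)
    (hint : hardyInt n s α Set.univ u₀ < ⊤)
    (C : ℝ) (hC : 0 < C)
    (hdecay : ∀ x : Rn n, 1 ≤ ‖x‖ → u₀ x ≤ C / ‖x‖ ^ ((n : ℝ) - 2 * s))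
    (Ω : Set (Rn n)) (hΩo : IsOpen Ω) (hΩb : Bornology.IsBounded Ω)
    (φ : Rn n → ℝ) (hφ : ContDiff ℝ (⊤ : ℕ∞) φ) (hφc : HasCompactSupport φ)
    (hφ0 : ∀ x, 0 ≤ φ x) (hφ1 : ∀ x, φ x ≤ 1) :
    Tendsto
      (fun ε : ℝ =>
        ∫⁻ x in ε⁻¹ • Ω, ∫⁻ y in ε⁻¹ • Ω,
          ENNReal.ofReal
            ((u₀ x) ^ 2 * |φ (ε • x) - φ (ε • y)| ^ 2 / ‖x - y‖ ^ ((n : ℝ) + 2 * s)))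
      (𝓝[>] 0) (𝓝 0) := by
  classical
  obtain ⟨K, hK⟩ := hφ.lipschitzWith_of_hasCompactSupport hφc (by simp)
  set L : ℝ := (K : ℝ) with hLdef
  have hL0 : 0 ≤ L := K.coe_nonneg
  set p : ℝ := (n:ℝ) + 2*s with hpdef
  set Kern : ℝ≥0∞ := ∫⁻ z : Rn n, ENNReal.ofReal (min (L^2*‖z‖^2) 4 / ‖z‖ ^ p) with hKdef
  set M : ℝ≥0∞ := ∫⁻ x : Rn n, ENNReal.ofReal ((u₀ x)^2) with hMdef
  have hKern : Kern < ⊤ := kernelFin n hs hs1 L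
  have hM : M < ⊤ := massFin n hs hn hα hα2 u₀ hmeas hpos hint C hdecay
  have hKM : Kern * M ≠ ⊤ := (ENNReal.mul_lt_top hKern hM).ne
  have hbound : ∀ ε : ℝ, 0 < ε →
      (∫⁻ x in ε⁻¹ • Ω, ∫⁻ y in ε⁻¹ • Ω,
          ENNReal.ofReal
            ((u₀ x) ^ 2 * |φ (ε • x) - φ (ε • y)| ^ 2 / ‖x - y‖ ^ ((n : ℝ) + 2 * s)))
        ≤ ENNReal.ofReal (ε ^ (2*s)) * (Kern * M) := by
    intro ε hε
    have hptwise : ∀ x y : Rn n,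
        ENNReal.ofReal ((u₀ x) ^ 2 * |φ (ε • x) - φ (ε • y)| ^ 2 / ‖x - y‖ ^ p)
          ≤ ENNReal.ofReal ((u₀ x)^2) *
            ENNReal.ofReal (min ((L*ε)^2*‖y - x‖^2) 4 / ‖y - x‖ ^ p) := by
      intro x y
      have hΔ2 : |φ (ε • x) - φ (ε • y)| ^ 2 ≤ min ((L*ε)^2*‖y - x‖^2) 4 := by
        apply le_min
        · have h := hK.dist_le_mul (ε • x) (ε • y)
          rw [Real.dist_eq, dist_eq_norm] at h
          have hnorm : ‖ε • x - ε • y‖ = ε * ‖x - y‖ := by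
            rw [← smul_sub, norm_smul, Real.norm_eq_abs, abs_of_pos hε]
          have h2 : |φ (ε • x) - φ (ε • y)| ≤ (L * ε) * ‖y - x‖ := by
            rw [norm_sub_rev]
            calc |φ (ε • x) - φ (ε • y)| ≤ L * ‖ε • x - ε • y‖ := h
              _ = (L * ε) * ‖x - y‖ := by rw [hnorm]; ring
          calc |φ (ε • x) - φ (ε • y)| ^ 2 ≤ ((L * ε) * ‖y - x‖) ^ 2 :=
                pow_le_pow_left₀ (abs_nonneg _) h2 2
            _ = (L*ε)^2*‖y - x‖^2 := mul_pow _ _ 2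
        · have hφle : |φ (ε • x) - φ (ε • y)| ≤ 1 := by
            rw [abs_sub_le_iff]
            constructor <;> [skip; skip] <;>
              · have := hφ0 (ε • x); have := hφ1 (ε • x)
                have := hφ0 (ε • y); have := hφ1 (ε • y)
                linarith
          calc |φ (ε • x) - φ (ε • y)| ^ 2 ≤ 1 ^ 2 :=
                pow_le_pow_left₀ (abs_nonneg _) hφle 2
            _ ≤ 4 := by norm_num
      have hre : (u₀ x) ^ 2 * |φ (ε • x) - φ (ε • y)| ^ 2 / ‖x - y‖ ^ p
          = (u₀ x) ^ 2 * (|φ (ε • x) - φ (ε • y)| ^ 2 / ‖y - x‖ ^ p) := by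
        rw [norm_sub_rev y x, mul_div_assoc]
      rw [hre, ENNReal.ofReal_mul (sq_nonneg _)]
      apply mul_le_mul_right
      apply ENNReal.ofReal_le_ofReal
      rcases eq_or_ne (‖y - x‖) 0 with h0 | h0
      · have hp0 : (0:ℝ) < p := by positivity
        rw [h0, Real.zero_rpow hp0.ne']
        simp only [_root_.div_zero, le_refl]
      · have hpos' : (0:ℝ) < ‖y - x‖ ^ p :=
          Real.rpow_pos_of_pos (lt_of_le_of_ne (norm_nonneg _) (Ne.symm h0)) p
        exact (div_le_div_iff_of_pos_right hpos').mpr hΔ2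
    set g : Rn n → ℝ≥0∞ :=
      fun w => ENNReal.ofReal (min ((L*ε)^2*‖w‖^2) 4 / ‖w‖ ^ p) with hgdef
    have hKernε : ∫⁻ w : Rn n, g w = ENNReal.ofReal (ε ^ (2*s)) * Kern :=
      kernelScale n hs L hε
    have htrans : ∀ x : Rn n, ∫⁻ y : Rn n, g (y - x) = ∫⁻ w : Rn n, g w := by
      intro x
      simp_rw [sub_eq_add_neg]
      exact lintegral_add_right_eq_self g (-x)
    calc ∫⁻ x in ε⁻¹ • Ω, ∫⁻ y in ε⁻¹ • Ω,
          ENNReal.ofReal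
            ((u₀ x) ^ 2 * |φ (ε • x) - φ (ε • y)| ^ 2 / ‖x - y‖ ^ ((n : ℝ) + 2 * s))
        ≤ ∫⁻ x in ε⁻¹ • Ω, ENNReal.ofReal ((u₀ x)^2) * (ENNReal.ofReal (ε ^ (2*s)) * Kern) := by
          apply lintegral_mono
          intro x
          calc ∫⁻ y in ε⁻¹ • Ω, ENNReal.ofReal
                ((u₀ x) ^ 2 * |φ (ε • x) - φ (ε • y)| ^ 2 / ‖x - y‖ ^ ((n : ℝ) + 2 * s))
              ≤ ∫⁻ y in ε⁻¹ • Ω, ENNReal.ofReal ((u₀ x)^2) * g (y - x) :=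
                lintegral_mono fun y => hptwise x y
            _ ≤ ∫⁻ y : Rn n, ENNReal.ofReal ((u₀ x)^2) * g (y - x) :=
                lintegral_mono' Measure.restrict_le_self le_rfl
            _ = ENNReal.ofReal ((u₀ x)^2) * ∫⁻ y : Rn n, g (y - x) :=
                lintegral_const_mul' _ _ ENNReal.ofReal_ne_top
            _ = ENNReal.ofReal ((u₀ x)^2) * (ENNReal.ofReal (ε ^ (2*s)) * Kern) := by
                rw [htrans x, hKernε]
      _ ≤ ∫⁻ x : Rn n, ENNReal.ofReal ((u₀ x)^2) * (ENNReal.ofReal (ε ^ (2*s)) * Kern) :=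
          lintegral_mono' Measure.restrict_le_self le_rfl
      _ = (∫⁻ x : Rn n, ENNReal.ofReal ((u₀ x)^2)) * (ENNReal.ofReal (ε ^ (2*s)) * Kern) :=
          lintegral_mul_const' _ _
            (by
              apply ENNReal.mul_ne_top ENNReal.ofReal_ne_top hKern.ne)
      _ = ENNReal.ofReal (ε ^ (2*s)) * (Kern * M) := by
          rw [← hMdef]; ring
  have hlim : Tendsto (fun ε : ℝ => ENNReal.ofReal (ε ^ (2*s)) * (Kern * M))
      (𝓝[>] (0:ℝ)) (𝓝 0) := by
    have h1 : Tendsto (fun ε : ℝ => ε ^ (2*s)) (𝓝[>] (0:ℝ)) (𝓝 0) := by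
      have hc : ContinuousAt (fun x : ℝ => x ^ (2*s)) 0 :=
        Real.continuousAt_rpow_const 0 (2*s) (Or.inr (by positivity))
      have := hc.tendsto.mono_left (nhdsWithin_le_nhds (s := Set.Ioi (0:ℝ)))
      rwa [Real.zero_rpow (by positivity : (2*s) ≠ 0)] at this
    have h2 : Tendsto (fun ε : ℝ => ENNReal.ofReal (ε ^ (2*s))) (𝓝[>] (0:ℝ)) (𝓝 0) := by
      have := (ENNReal.continuous_ofReal.tendsto 0).comp h1
      simpa [Function.comp_def] using this
    have h3 := ENNReal.Tendsto.mul_const h2 (Or.inr hKM)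
    simpa using h3
  apply tendsto_of_tendsto_of_tendsto_of_le_of_le' tendsto_const_nhds hlim
  · exact Eventually.of_forall fun ε => zero_le
  · filter_upwards [self_mem_nhdsWithin] with ε hε
    exact hbound ε hε
end
end

section
/- Let n ∈ ℕ, 0 < s < 1, and let Ω ⊆ ℝⁿ be an open set. Let ψ ∈ C_c^1(Ω) with 0 ≤ ψ ≤ 1 on Ω, extended by 0 to ℝⁿ. Then for every ε > 0 there exists a constant C = C(ψ, n, s, ε) > 0 such that for every u ∈ L²(Ω) with [u]_{s,Ω} < ∞ (and ψu extended by 0 outside Ω): [ψu]_s² ≤ (1+ε) ∫_{Ω×Ω} ψ(y)² |u(x)−u(y)|²/|x−y|^{n+2s} dx dy + C ∫_Ω |u|² dx. -/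
open MeasureTheory ENNReal Filter Topology

noncomputable section

/-!
Split `[ψu]_s²` according to whether `x ∈ Ω`. For `x ∈ Ω` apply `(a + b)² ≤ (1 + ε)a² + (1 + ε⁻¹)b²`
to `ψ(x)u(x) − ψ(y)u(y) = ψ(y)(u(x) − u(y)) + u(x)(ψ(x) − ψ(y))`; for `x ∉ Ω` we have `ψ(x) = 0`, so
the integrand is `u(y)²(ψ(y) − ψ(x))²/|x − y|^{n+2s}` and Tonelli moves the `x`-integral inside.
Both error terms are then controlled by `sup_x ∫ (ψ(x) − ψ(y))²/|x − y|^{n+2s} dy`, which is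
finite (in polar coordinates) because `(ψ(x) − ψ(y))² ≤ min(L²|x − y|², 4‖ψ‖∞²)` and
`n < n + 2s < n + 2`.
-/

open Set Module
open scoped NNReal

theorem integrableOn_pow_mul_min_div_rpow {k : ℕ} {a c p : ℝ} (ha : 0 ≤ a) (hc : 0 ≤ c)
    (hp : (k : ℝ) + 1 < p) (hp2 : p < k + 3) :
    IntegrableOn (fun r : ℝ => r ^ k * (min (a * r ^ 2) c / r ^ p)) (Ioi 0) := by
  rw [← Ioc_union_Ioi_eq_Ioi zero_le_one]
  have hmeas : AEStronglyMeasurable (fun r : ℝ => r ^ k * (min (a * r ^ 2) c / r ^ p)) := by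
    fun_prop
  refine IntegrableOn.union ?_ ?_
  · refine Integrable.mono' (((intervalIntegral.intervalIntegrable_rpow'
      (r := (k : ℝ) + 2 - p) (by linarith)).1).const_mul a) hmeas.restrict ?_
    refine (ae_restrict_iff' measurableSet_Ioc).2 (.of_forall fun r ⟨hr0, _⟩ => ?_)
    rw [Real.norm_of_nonneg (by positivity), Real.rpow_sub hr0, Real.rpow_add hr0,
      Real.rpow_natCast, Real.rpow_two, mul_div_assoc']
    calc r ^ k * min (a * r ^ 2) c / r ^ p ≤ r ^ k * (a * r ^ 2) / r ^ p := by
          gcongr; exact min_le_left _ _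
      _ = a * (r ^ k * r ^ 2 / r ^ p) := by ring
  · refine Integrable.mono' ((integrableOn_Ioi_rpow_of_lt (a := (k : ℝ) - p) (by linarith)
      zero_lt_one).const_mul c) hmeas.restrict ?_
    refine (ae_restrict_iff' measurableSet_Ioi).2 (.of_forall fun r (hr : 1 < r) => ?_)
    have hr0 : 0 < r := zero_lt_one.trans hr
    rw [Real.norm_of_nonneg (by positivity), Real.rpow_sub hr0, Real.rpow_natCast, mul_div_assoc']
    calc r ^ k * min (a * r ^ 2) c / r ^ p ≤ r ^ k * c / r ^ p := by
          gcongr; exact min_le_right _ _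
      _ = c * (r ^ k / r ^ p) := by ring

section HaarMeasure

variable {E : Type*} [NormedAddCommGroup E] [NormedSpace ℝ E] [FiniteDimensional ℝ E]
  [MeasurableSpace E] [BorelSpace E] (μ : Measure E) [μ.IsAddHaarMeasure]

theorem integrable_min_mul_sq_norm_div_rpow {a c p : ℝ} (ha : 0 ≤ a) (hc : 0 ≤ c)
    (hp : (finrank ℝ E : ℝ) < p) (hp2 : p < finrank ℝ E + 2) :
    Integrable (fun z : E => min (a * ‖z‖ ^ 2) c / ‖z‖ ^ p) μ := by
  rcases subsingleton_or_nontrivial E with hE | hE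
  · have hp0 : p ≠ 0 := by
      rw [finrank_zero_of_subsingleton] at hp; exact_mod_cast hp.ne'
    have h0 : (fun z : E => min (a * ‖z‖ ^ 2) c / ‖z‖ ^ p) = 0 := by
      funext z
      simp [Subsingleton.elim z 0, Real.zero_rpow hp0]
    exact h0 ▸ integrable_zero E ℝ μ
  · have hd : 1 ≤ finrank ℝ E := Module.finrank_pos
    refine (integrable_fun_norm_addHaar μ (f := fun r => min (a * r ^ 2) c / r ^ p)).2 ?_
    refine integrableOn_pow_mul_min_div_rpow ha hc ?_ ?_ <;>
      rw [Nat.cast_sub hd, Nat.cast_one] <;> linarith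

variable {μ} in
theorem iSup_lintegral_sq_sub_div_rpow_lt_top {ψ : E → ℝ} {K : ℝ≥0} (hψ : LipschitzWith K ψ)
    {B : ℝ} (hB : ∀ x, ‖ψ x‖ ≤ B) {p : ℝ} (hp : (finrank ℝ E : ℝ) < p)
    (hp2 : p < finrank ℝ E + 2) :
    ⨆ x, ∫⁻ y, ENNReal.ofReal ((ψ x - ψ y) ^ 2 / ‖x - y‖ ^ p) ∂μ < ⊤ := by
  have hB0 : 0 ≤ B := (norm_nonneg _).trans (hB 0)
  have hsq : ∀ x y, (ψ x - ψ y) ^ 2 ≤ min (K ^ 2 * ‖y - x‖ ^ 2) ((2 * B) ^ 2) := by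
    intro x y
    rw [← sq_abs, ← mul_pow, norm_sub_rev]
    refine le_min (pow_le_pow_left₀ (abs_nonneg _) ?_ 2) (pow_le_pow_left₀ (abs_nonneg _) ?_ 2)
    · simpa [Real.dist_eq, dist_eq_norm] using hψ.dist_le_mul x y
    · linarith [abs_sub (ψ x) (ψ y), hB x, hB y, Real.norm_eq_abs (ψ x), Real.norm_eq_abs (ψ y)]
  refine lt_of_le_of_lt (iSup_le fun x => ?_) ((integrable_min_mul_sq_norm_div_rpow μ
    (sq_nonneg (K : ℝ)) (sq_nonneg (2 * B)) hp hp2).lintegral_lt_top)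
  calc ∫⁻ y, ENNReal.ofReal ((ψ x - ψ y) ^ 2 / ‖x - y‖ ^ p) ∂μ
      ≤ ∫⁻ y, ENNReal.ofReal (min (K ^ 2 * ‖y - x‖ ^ 2) ((2 * B) ^ 2) / ‖y - x‖ ^ p) ∂μ := by
        refine lintegral_mono fun y => ENNReal.ofReal_le_ofReal ?_
        rw [norm_sub_rev x y]
        exact div_le_div_of_nonneg_right (hsq x y) (by positivity)
    _ = _ := lintegral_sub_right_eq_self
        (fun z => ENNReal.ofReal (min (K ^ 2 * ‖z‖ ^ 2) ((2 * B) ^ 2) / ‖z‖ ^ p)) x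

end HaarMeasure

theorem add_sq_le_one_add_mul_sq_add {ε : ℝ} (hε : 0 < ε) (a b : ℝ) :
    (a + b) ^ 2 ≤ (1 + ε) * a ^ 2 + (1 + ε⁻¹) * b ^ 2 := by
  have h := mul_nonneg (inv_nonneg.2 hε.le) (sq_nonneg (ε * a - b))
  have hεε : ε⁻¹ * ε = 1 := inv_mul_cancel₀ hε.ne'
  nlinarith

theorem sq_abs_mul_sub_mul_le {ε : ℝ} (hε : 0 < ε) (ψx ψy ux uy : ℝ) :
    |ψx * ux - ψy * uy| ^ 2 ≤
      (1 + ε) * (ψy ^ 2 * |ux - uy| ^ 2) + (1 + ε⁻¹) * (ux ^ 2 * (ψx - ψy) ^ 2) := by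
  have h := add_sq_le_one_add_mul_sq_add hε (ψy * (ux - uy)) (ux * (ψx - ψy))
  rw [sq_abs, sq_abs]
  linarith [show ψx * ux - ψy * uy = ψy * (ux - uy) + ux * (ψx - ψy) by ring,
    mul_pow ψy (ux - uy) 2, mul_pow ux (ψx - ψy) 2]

theorem lintegral_lintegral_congr_ae {α β : Type*} {mα : MeasurableSpace α} {μ : Measure α}
    {f g : α → β} (h : f =ᵐ[μ] g) (Φ : α → α → β → β → ℝ≥0∞) :
    ∫⁻ x, ∫⁻ y, Φ x y (f x) (f y) ∂μ ∂μ = ∫⁻ x, ∫⁻ y, Φ x y (g x) (g y) ∂μ ∂μ :=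
  lintegral_congr_ae <| h.mono fun x hx => by
    dsimp only
    rw [hx, lintegral_congr_ae (h.mono fun y hy => by rw [hy])]

section SplitAtOmega

variable {E : Type*} [NormedAddCommGroup E] [MeasurableSpace E] [BorelSpace E]
  {μ : Measure E} {Ω : Set E} {ψ u : E → ℝ} {p ε : ℝ} {M : ℝ≥0∞}

theorem lintegral_sq_mul_sub_div_le (hψ : Measurable ψ) (hu : Measurable u)
    (hψΩ : ∀ y ∉ Ω, ψ y = 0) (hε : 0 < ε) {x : E}
    (hM : ∫⁻ y, ENNReal.ofReal ((ψ x - ψ y) ^ 2 / ‖x - y‖ ^ p) ∂μ ≤ M) :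
    ∫⁻ y, ENNReal.ofReal (|ψ x * u x - ψ y * u y| ^ 2 / ‖x - y‖ ^ p) ∂μ ≤
      ENNReal.ofReal (1 + ε) *
          ∫⁻ y in Ω, ENNReal.ofReal ((ψ y) ^ 2 * |u x - u y| ^ 2 / ‖x - y‖ ^ p) ∂μ +
        ENNReal.ofReal (1 + ε⁻¹) * M * ENNReal.ofReal ((u x) ^ 2) := by
  have hsupp : (fun y => ENNReal.ofReal ((ψ y) ^ 2 * |u x - u y| ^ 2 / ‖x - y‖ ^ p)).support ⊆ Ω :=
    fun y hy => by_contra fun hyΩ => hy (by simp [hψΩ y hyΩ])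
  calc ∫⁻ y, ENNReal.ofReal (|ψ x * u x - ψ y * u y| ^ 2 / ‖x - y‖ ^ p) ∂μ
      ≤ ∫⁻ y, (ENNReal.ofReal (1 + ε) *
            ENNReal.ofReal ((ψ y) ^ 2 * |u x - u y| ^ 2 / ‖x - y‖ ^ p) +
          ENNReal.ofReal (1 + ε⁻¹) * ENNReal.ofReal ((u x) ^ 2) *
            ENNReal.ofReal ((ψ x - ψ y) ^ 2 / ‖x - y‖ ^ p)) ∂μ := by
        refine lintegral_mono fun y => ?_
        rw [← ENNReal.ofReal_mul (by positivity), ← ENNReal.ofReal_mul (by positivity),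
          ← ENNReal.ofReal_mul (by positivity), ← ENNReal.ofReal_add (by positivity)
          (by positivity)]
        refine ENNReal.ofReal_le_ofReal ?_
        calc |ψ x * u x - ψ y * u y| ^ 2 / ‖x - y‖ ^ p
            ≤ ((1 + ε) * (ψ y ^ 2 * |u x - u y| ^ 2) +
                (1 + ε⁻¹) * (u x ^ 2 * (ψ x - ψ y) ^ 2)) / ‖x - y‖ ^ p := by
              gcongr; exact sq_abs_mul_sub_mul_le hε _ _ _ _
          _ = _ := by ring
    _ = ENNReal.ofReal (1 + ε) *
          ∫⁻ y in Ω, ENNReal.ofReal ((ψ y) ^ 2 * |u x - u y| ^ 2 / ‖x - y‖ ^ p) ∂μ +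
        ENNReal.ofReal (1 + ε⁻¹) * ENNReal.ofReal ((u x) ^ 2) *
          ∫⁻ y, ENNReal.ofReal ((ψ x - ψ y) ^ 2 / ‖x - y‖ ^ p) ∂μ := by
        rw [lintegral_add_left (by fun_prop), lintegral_const_mul _ (by fun_prop),
          lintegral_const_mul _ (by fun_prop), setLIntegral_eq_of_support_subset hsupp]
    _ ≤ _ := by
        rw [mul_right_comm _ M]
        gcongr

theorem setLIntegral_compl_lintegral_sq_mul_sub_div_le [SecondCountableTopology E] [SFinite μ]
    (hΩ : MeasurableSet Ω) (hψ : Measurable ψ) (hu : Measurable u) (hψΩ : ∀ y ∉ Ω, ψ y = 0)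
    (hu0 : ∀ y ∉ Ω, u y = 0)
    (hM : ∀ x, ∫⁻ y, ENNReal.ofReal ((ψ x - ψ y) ^ 2 / ‖x - y‖ ^ p) ∂μ ≤ M) :
    ∫⁻ x in Ωᶜ, ∫⁻ y, ENNReal.ofReal (|ψ x * u x - ψ y * u y| ^ 2 / ‖x - y‖ ^ p) ∂μ ∂μ ≤
      M * ∫⁻ y in Ω, ENNReal.ofReal ((u y) ^ 2) ∂μ := by
  have hsupp : (fun y => ENNReal.ofReal ((u y) ^ 2)).support ⊆ Ω :=
    fun y hy => by_contra fun hyΩ => hy (by simp [hu0 y hyΩ])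
  calc ∫⁻ x in Ωᶜ, ∫⁻ y, ENNReal.ofReal (|ψ x * u x - ψ y * u y| ^ 2 / ‖x - y‖ ^ p) ∂μ ∂μ
      = ∫⁻ x in Ωᶜ, ∫⁻ y, ENNReal.ofReal ((u y) ^ 2) *
          ENNReal.ofReal ((ψ y - ψ x) ^ 2 / ‖y - x‖ ^ p) ∂μ ∂μ := by
        refine setLIntegral_congr_fun hΩ.compl fun x hx => lintegral_congr fun y => ?_
        rw [hψΩ x hx, ← ENNReal.ofReal_mul (sq_nonneg _), norm_sub_rev, sq_abs]
        ring_nf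
    _ ≤ ∫⁻ x, ∫⁻ y, ENNReal.ofReal ((u y) ^ 2) *
          ENNReal.ofReal ((ψ y - ψ x) ^ 2 / ‖y - x‖ ^ p) ∂μ ∂μ := setLIntegral_le_lintegral _ _
    _ = ∫⁻ y, ENNReal.ofReal ((u y) ^ 2) *
          ∫⁻ x, ENNReal.ofReal ((ψ y - ψ x) ^ 2 / ‖y - x‖ ^ p) ∂μ ∂μ := by
        rw [lintegral_lintegral_swap (by fun_prop)]
        exact lintegral_congr fun y => lintegral_const_mul _ (by fun_prop)
    _ ≤ ∫⁻ y, ENNReal.ofReal ((u y) ^ 2) * M ∂μ := by gcongr with y; exact hM y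
    _ = M * ∫⁻ y in Ω, ENNReal.ofReal ((u y) ^ 2) ∂μ := by
        rw [lintegral_mul_const _ (by fun_prop), mul_comm, setLIntegral_eq_of_support_subset hsupp]

theorem lintegral_lintegral_sq_mul_sub_div_le [SecondCountableTopology E] [SFinite μ]
    (hΩ : MeasurableSet Ω) (hψ : Measurable ψ) (hu : Measurable u) (hψΩ : ∀ y ∉ Ω, ψ y = 0)
    (hu0 : ∀ y ∉ Ω, u y = 0) (hε : 0 < ε)
    (hM : ∀ x, ∫⁻ y, ENNReal.ofReal ((ψ x - ψ y) ^ 2 / ‖x - y‖ ^ p) ∂μ ≤ M) :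
    ∫⁻ x, ∫⁻ y, ENNReal.ofReal (|ψ x * u x - ψ y * u y| ^ 2 / ‖x - y‖ ^ p) ∂μ ∂μ ≤
      ENNReal.ofReal (1 + ε) * ∫⁻ x in Ω, ∫⁻ y in Ω,
          ENNReal.ofReal ((ψ y) ^ 2 * |u x - u y| ^ 2 / ‖x - y‖ ^ p) ∂μ ∂μ +
        ENNReal.ofReal (2 + ε⁻¹) * M * ∫⁻ x in Ω, ENNReal.ofReal ((u x) ^ 2) ∂μ := by
  have hinner : Measurable fun x => ∫⁻ y in Ω,
      ENNReal.ofReal ((ψ y) ^ 2 * |u x - u y| ^ 2 / ‖x - y‖ ^ p) ∂μ :=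
    Measurable.lintegral_prod_right (by fun_prop)
  have hΩpart : ∫⁻ x in Ω, ∫⁻ y,
      ENNReal.ofReal (|ψ x * u x - ψ y * u y| ^ 2 / ‖x - y‖ ^ p) ∂μ ∂μ ≤
      ENNReal.ofReal (1 + ε) * ∫⁻ x in Ω, ∫⁻ y in Ω,
          ENNReal.ofReal ((ψ y) ^ 2 * |u x - u y| ^ 2 / ‖x - y‖ ^ p) ∂μ ∂μ +
        ENNReal.ofReal (1 + ε⁻¹) * M * ∫⁻ x in Ω, ENNReal.ofReal ((u x) ^ 2) ∂μ := by
    refine (lintegral_mono fun x => lintegral_sq_mul_sub_div_le hψ hu hψΩ hε (hM x)).trans_eq ?_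
    rw [lintegral_add_left (hinner.const_mul _), lintegral_const_mul _ hinner,
      lintegral_const_mul _ (by fun_prop)]
  rw [← lintegral_add_compl _ hΩ]
  calc _ ≤ _ := add_le_add hΩpart
        (setLIntegral_compl_lintegral_sq_mul_sub_div_le hΩ hψ hu hψΩ hu0 hM)
    _ = _ := by
      rw [show (2 : ℝ) + ε⁻¹ = 1 + ε⁻¹ + 1 by ring, ENNReal.ofReal_add (by positivity) zero_le_one,
        ENNReal.ofReal_one]
      ring

end SplitAtOmega

theorem gagSq_mul_le {n : ℕ} {s ε : ℝ} {Ω : Set (Rn n)} {ψ u : Rn n → ℝ} {M : ℝ≥0∞}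
    (hΩ : MeasurableSet Ω) (hψ : Measurable ψ) (hψΩ : ∀ y ∉ Ω, ψ y = 0) (hε : 0 < ε)
    (hM : ∀ x, ∫⁻ y, ENNReal.ofReal ((ψ x - ψ y) ^ 2 / ‖x - y‖ ^ ((n : ℝ) + 2 * s)) ≤ M)
    (hu : AEStronglyMeasurable u (volume.restrict Ω)) :
    gagSq n s Set.univ (fun x => ψ x * u x) ≤
      ENNReal.ofReal (1 + ε) * (∫⁻ x in Ω, ∫⁻ y in Ω,
          ENNReal.ofReal ((ψ y) ^ 2 * |u x - u y| ^ 2 / ‖x - y‖ ^ ((n : ℝ) + 2 * s))) +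
        ENNReal.ofReal (2 + ε⁻¹) * M * ∫⁻ x in Ω, ENNReal.ofReal ((u x) ^ 2) := by
  set v := Ω.indicator (hu.mk u)
  have huv : u =ᵐ[volume.restrict Ω] v := hu.ae_eq_mk.trans (indicator_ae_eq_restrict hΩ).symm
  have hψuv : (fun x => ψ x * u x) =ᵐ[volume] fun x => ψ x * v x := by
    filter_upwards [(ae_restrict_iff' hΩ).1 huv] with x hx
    by_cases hxΩ : x ∈ Ω
    · rw [hx hxΩ]
    · simp [hψΩ x hxΩ]
  have hU : ∫⁻ x in Ω, ENNReal.ofReal ((u x) ^ 2) = ∫⁻ x in Ω, ENNReal.ofReal ((v x) ^ 2) :=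
    lintegral_congr_ae (huv.mono fun x hx => by simp only [hx])
  rw [gagSq, Measure.restrict_univ,
    lintegral_lintegral_congr_ae hψuv fun x y a b => ENNReal.ofReal (|a - b| ^ 2 / ‖x - y‖ ^ _),
    lintegral_lintegral_congr_ae huv
      fun x y a b => ENNReal.ofReal ((ψ y) ^ 2 * |a - b| ^ 2 / ‖x - y‖ ^ ((n : ℝ) + 2 * s)),
    hU]
  refine lintegral_lintegral_sq_mul_sub_div_le hΩ hψ ?_ hψΩ (fun y hy => ?_) hε hM
  · exact hu.stronglyMeasurable_mk.measurable.indicator hΩ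
  · exact indicator_of_notMem hy _

theorem stmt_16_general (n : ℕ) (s : ℝ) (hs : 0 < s) (hs1 : s < 1)
    (Ω : Set (Rn n)) (hΩo : IsOpen Ω)
    (ψ : Rn n → ℝ) (hψ : ContDiff ℝ 1 ψ) (hψc : HasCompactSupport ψ)
    (hψsupp : tsupport ψ ⊆ Ω) :
    ∀ ε : ℝ, 0 < ε → ∃ C : ℝ, 0 < C ∧
      ∀ u : Rn n → ℝ, MemLp u 2 (volume.restrict Ω) → gagSq n s Ω u < ⊤ →
        gagSq n s Set.univ (fun x => ψ x * u x) ≤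
          ENNReal.ofReal (1 + ε) *
              (∫⁻ x in Ω, ∫⁻ y in Ω,
                ENNReal.ofReal ((ψ y) ^ 2 * |u x - u y| ^ 2 / ‖x - y‖ ^ ((n : ℝ) + 2 * s))) +
            ENNReal.ofReal C * ∫⁻ x in Ω, ENNReal.ofReal ((u x) ^ 2) := by
  intro ε hε
  obtain ⟨K, hK⟩ := hψ.lipschitzWith_of_hasCompactSupport hψc one_ne_zero
  obtain ⟨B, hB⟩ := hψ.continuous.bounded_above_of_compact_support hψc
  have hdim : finrank ℝ (Rn n) = n := finrank_euclideanSpace_fin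
  have hM := iSup_lintegral_sq_sub_div_rpow_lt_top (μ := volume) hK hB
    (p := (n : ℝ) + 2 * s) (by rw [hdim]; linarith) (by rw [hdim]; linarith)
  set M := ⨆ x, ∫⁻ y, ENNReal.ofReal ((ψ x - ψ y) ^ 2 / ‖x - y‖ ^ ((n : ℝ) + 2 * s))
  refine ⟨(2 + ε⁻¹) * M.toReal + 1, by positivity, fun u hu _ => ?_⟩
  have hψΩ : ∀ y ∉ Ω, ψ y = 0 := fun y hy => image_eq_zero_of_notMem_tsupport (hy <| hψsupp ·)
  refine (gagSq_mul_le hΩo.measurableSet hψ.continuous.measurable hψΩ hε (le_iSup _)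
    hu.aestronglyMeasurable).trans ?_
  gcongr
  calc ENNReal.ofReal (2 + ε⁻¹) * M = ENNReal.ofReal ((2 + ε⁻¹) * M.toReal) := by
        rw [ENNReal.ofReal_mul (by positivity), ENNReal.ofReal_toReal hM.ne]
    _ ≤ _ := ENNReal.ofReal_le_ofReal (by linarith)

/-- For `ψ ∈ C_c^1(Ω)` with `0 ≤ ψ ≤ 1` and every `ε > 0` there is
`C > 0` such that for every `u ∈ L²(Ω)` with `[u]_{s,Ω} < ∞`,
`[ψu]_s² ≤ (1+ε) ∫_{Ω×Ω} ψ(y)²|u(x)−u(y)|²/|x−y|^{n+2s} + C ∫_Ω |u|²`. -/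
theorem stmt_16 (n : ℕ) (s : ℝ) (hs : 0 < s) (hs1 : s < 1)
    (Ω : Set (Rn n)) (hΩo : IsOpen Ω)
    (ψ : Rn n → ℝ) (hψ : ContDiff ℝ 1 ψ) (hψc : HasCompactSupport ψ)
    (hψsupp : tsupport ψ ⊆ Ω)
    (hψ0 : ∀ x, 0 ≤ ψ x) (hψ1 : ∀ x, ψ x ≤ 1) :
    ∀ ε : ℝ, 0 < ε → ∃ C : ℝ, 0 < C ∧
      ∀ u : Rn n → ℝ, MemLp u 2 (volume.restrict Ω) → gagSq n s Ω u < ⊤ →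
        gagSq n s Set.univ (fun x => ψ x * u x) ≤
          ENNReal.ofReal (1 + ε) *
              (∫⁻ x in Ω, ∫⁻ y in Ω,
                ENNReal.ofReal ((ψ y) ^ 2 * |u x - u y| ^ 2 / ‖x - y‖ ^ ((n : ℝ) + 2 * s))) +
            ENNReal.ofReal C * ∫⁻ x in Ω, ENNReal.ofReal ((u x) ^ 2) :=
  stmt_16_general n s hs hs1 Ω hΩo ψ hψ hψc hψsupp
end
end
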